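/- Let A be a Noetherian k-algebra containing a field. Suppose there is a maximal ideal m ⊂ A and an integer N ≥ 1 such that m^N · Der_k(A) ⊆ IDer_k(A). Let K = A/m. Then the number of leaps of A over k is at most dim_K (Der_k(A)/m^N Der_k(A)). In particular, if Der_k(A) is finitely generated as an A-module, then Leap_k(A) is finite. -/

import Mathlib

open scoped BigOperators

universe u v w

section HS
variable (k A : Type*) [CommRing k] [CommRing A] [Algebra k A]

/-- `D` is a Hasse–Schmidt derivation of `A` over `k` of length `m`
(`m = ⊤` means length `∞`): `D 0 = id` and the Leibniz rule holds in each degree `≤ m`. -/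
def IsHSDeriv (m : ℕ∞) (D : ℕ → A →ₗ[k] A) : Prop :=
  D 0 = LinearMap.id ∧
  ∀ α : ℕ, (α : ℕ∞) ≤ m → ∀ x y : A,
    D α (x * y) = ∑ ij ∈ Finset.HasAntidiagonal.antidiagonal α, D ij.1 x * D ij.2 y

/-- A derivation is `m`-integrable if it extends to a Hasse–Schmidt derivation of length `m`. -/
def IsIntegrable (m : ℕ∞) (δ : Derivation k A A) : Prop :=
  ∃ D : ℕ → A →ₗ[k] A, IsHSDeriv k A m D ∧ D 1 = δ.toLinearMap

/-- The set of leaps of `A` over `k`: those `s ≥ 2` where some derivation is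
`(s-1)`-integrable but not `s`-integrable. -/
def LeapSet : Set ℕ :=
  {s | 2 ≤ s ∧ ∃ δ : Derivation k A A,
    IsIntegrable k A ((s - 1 : ℕ) : ℕ∞) δ ∧ ¬ IsIntegrable k A (s : ℕ∞) δ}

end HS

/-! ### Auxiliary lemmas -/

lemma sum_antidiagonal_assoc' {M : Type*} [AddCommMonoid M] (α : ℕ) (f : ℕ → ℕ → ℕ → ℕ → M) :
    ∑ ij ∈ Finset.HasAntidiagonal.antidiagonal α, ∑ rt ∈ Finset.HasAntidiagonal.antidiagonal ij.1,
      ∑ pq ∈ Finset.HasAntidiagonal.antidiagonal ij.2, f rt.1 rt.2 pq.1 pq.2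
    = ∑ uv ∈ Finset.HasAntidiagonal.antidiagonal α, ∑ rp ∈ Finset.HasAntidiagonal.antidiagonal uv.1,
      ∑ tq ∈ Finset.HasAntidiagonal.antidiagonal uv.2, f rp.1 tq.1 rp.2 tq.2 := by
  have h1 : ∀ (g : ℕ × ℕ → ℕ × ℕ → ℕ × ℕ → M),
      ∑ ij ∈ Finset.HasAntidiagonal.antidiagonal α, ∑ ab ∈ Finset.HasAntidiagonal.antidiagonal ij.1,
        ∑ cd ∈ Finset.HasAntidiagonal.antidiagonal ij.2, g ij ab cd
      = ∑ x ∈ (Finset.HasAntidiagonal.antidiagonal α).sigma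
          (fun ij => (Finset.HasAntidiagonal.antidiagonal ij.1) ×ˢ (Finset.HasAntidiagonal.antidiagonal ij.2)),
          g x.1 x.2.1 x.2.2 := by
    intro g
    rw [Finset.sum_sigma]
    refine Finset.sum_congr rfl fun ij _ => ?_
    rw [Finset.sum_product]
  rw [h1, h1]
  refine Finset.sum_nbij' (i := fun x => ⟨(x.2.1.1 + x.2.2.1, x.2.1.2 + x.2.2.2),
      ((x.2.1.1, x.2.2.1), (x.2.1.2, x.2.2.2))⟩)
    (j := fun x => ⟨(x.2.1.1 + x.2.2.1, x.2.1.2 + x.2.2.2),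
      ((x.2.1.1, x.2.2.1), (x.2.1.2, x.2.2.2))⟩) ?_ ?_ ?_ ?_ ?_
  · rintro ⟨⟨i,j⟩, ⟨⟨r,t⟩,⟨p,q⟩⟩⟩ hm
    simp +arith [Finset.mem_sigma, Finset.mem_product, Finset.HasAntidiagonal.mem_antidiagonal] at hm ⊢
    omega
  · rintro ⟨⟨i,j⟩, ⟨⟨r,t⟩,⟨p,q⟩⟩⟩ hm
    simp +arith [Finset.mem_sigma, Finset.mem_product, Finset.HasAntidiagonal.mem_antidiagonal] at hm ⊢
    omega
  · rintro ⟨⟨i,j⟩, ⟨⟨r,t⟩,⟨p,q⟩⟩⟩ hm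
    simp only [Finset.mem_sigma, Finset.mem_product, Finset.HasAntidiagonal.mem_antidiagonal] at hm
    obtain ⟨h0, h1', h2⟩ := hm
    subst h1'; subst h2; rfl
  · rintro ⟨⟨i,j⟩, ⟨⟨r,t⟩,⟨p,q⟩⟩⟩ hm
    simp only [Finset.mem_sigma, Finset.mem_product, Finset.HasAntidiagonal.mem_antidiagonal] at hm
    obtain ⟨h0, h1', h2⟩ := hm
    subst h1'; subst h2; rfl
  · rintro ⟨⟨i,j⟩, ⟨⟨r,t⟩,⟨p,q⟩⟩⟩ _
    rfl

section lemmas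
variable {k A : Type*} [CommRing k] [CommRing A] [Algebra k A]

lemma isIntegrable_mono' {m m' : ℕ∞} (h : m' ≤ m) {δ : Derivation k A A}
    (hδ : IsIntegrable k A m δ) : IsIntegrable k A m' δ := by
  obtain ⟨D, ⟨h0, hL⟩, h1⟩ := hδ
  exact ⟨D, ⟨h0, fun α hα => hL α (le_trans hα h)⟩, h1⟩

lemma isIntegrable_zero' (m : ℕ∞) : IsIntegrable k A m (0 : Derivation k A A) := by
  refine ⟨fun i => if i = 0 then LinearMap.id else 0, ⟨by simp, ?_⟩, by simp⟩
  intro α _ x y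
  beta_reduce
  rcases Nat.eq_zero_or_pos α with h | h
  · subst h; simp
  · rw [if_neg (by omega)]
    simp only [LinearMap.zero_apply]
    symm
    apply Finset.sum_eq_zero
    intro ij hij
    rw [Finset.HasAntidiagonal.mem_antidiagonal] at hij
    rcases Nat.eq_zero_or_pos ij.1 with h1 | h1
    · have h2 : ij.2 ≠ 0 := by omega
      rw [if_neg h2]
      simp
    · rw [if_neg (by omega : ¬ ij.1 = 0)]
      simp

lemma isIntegrable_smul' (a : A) {m : ℕ∞} {δ : Derivation k A A}
    (hδ : IsIntegrable k A m δ) : IsIntegrable k A m (a • δ) := by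
  obtain ⟨D, ⟨h0, hL⟩, h1⟩ := hδ
  refine ⟨fun i => a ^ i • D i, ⟨by simp [h0], ?_⟩, by ext x; simp [h1]⟩
  intro α hα x y
  beta_reduce
  simp only [LinearMap.smul_apply]
  rw [hL α hα x y, Finset.smul_sum]
  refine Finset.sum_congr rfl fun ij hij => ?_
  rw [Finset.HasAntidiagonal.mem_antidiagonal] at hij
  rw [← hij, pow_add]
  simp only [smul_eq_mul]
  ring

lemma isIntegrable_add' {m : ℕ∞} {δ ε : Derivation k A A}
    (hδ : IsIntegrable k A m δ) (hε : IsIntegrable k A m ε) :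
    IsIntegrable k A m (δ + ε) := by
  obtain ⟨D, ⟨hD0, hDL⟩, hD1⟩ := hδ
  obtain ⟨E, ⟨hE0, hEL⟩, hE1⟩ := hε
  refine ⟨fun α => ∑ ij ∈ Finset.HasAntidiagonal.antidiagonal α, (D ij.1).comp (E ij.2), ⟨?_, ?_⟩, ?_⟩
  · simp [hD0, hE0]
  · intro α hα x y
    beta_reduce
    simp only [LinearMap.coe_sum, Finset.sum_apply, LinearMap.comp_apply]
    calc
      ∑ ij ∈ Finset.HasAntidiagonal.antidiagonal α, (D ij.1) ((E ij.2) (x * y))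
          = ∑ ij ∈ Finset.HasAntidiagonal.antidiagonal α, ∑ rt ∈ Finset.HasAntidiagonal.antidiagonal ij.1,
              ∑ pq ∈ Finset.HasAntidiagonal.antidiagonal ij.2, D rt.1 (E pq.1 x) * D rt.2 (E pq.2 y) := by
            refine Finset.sum_congr rfl fun ij hij => ?_
            rw [Finset.HasAntidiagonal.mem_antidiagonal] at hij
            have hij1 : (ij.1 : ℕ∞) ≤ m := le_trans (by exact_mod_cast Nat.le.intro hij) hα
            have hij2 : (ij.2 : ℕ∞) ≤ m := le_trans
              (by exact_mod_cast Nat.le.intro ((Nat.add_comm ij.1 ij.2) ▸ hij)) hα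
            rw [hEL ij.2 hij2 x y, map_sum, Finset.sum_comm]
            refine Finset.sum_congr rfl fun pq _ => ?_
            exact hDL ij.1 hij1 _ _
      _ = ∑ uv ∈ Finset.HasAntidiagonal.antidiagonal α, ∑ rp ∈ Finset.HasAntidiagonal.antidiagonal uv.1,
            ∑ tq ∈ Finset.HasAntidiagonal.antidiagonal uv.2, D rp.1 (E rp.2 x) * D tq.1 (E tq.2 y) :=
          sum_antidiagonal_assoc' α (fun r t p q => D r (E p x) * D t (E q y))
      _ = ∑ uv ∈ Finset.HasAntidiagonal.antidiagonal α,
            (∑ rp ∈ Finset.HasAntidiagonal.antidiagonal uv.1, D rp.1 (E rp.2 x)) *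
            (∑ tq ∈ Finset.HasAntidiagonal.antidiagonal uv.2, D tq.1 (E tq.2 y)) := by
          refine Finset.sum_congr rfl fun uv _ => ?_
          rw [Finset.sum_mul_sum]
  · ext x
    simp only [LinearMap.coe_sum, Finset.sum_apply, LinearMap.comp_apply]
    rw [show Finset.HasAntidiagonal.antidiagonal 1 = {(0,1),(1,0)} from rfl]
    simp [hD0, hE0, hD1, hE1]
    exact add_comm _ _

end lemmas

/-- The submodule of `m`-integrable derivations. -/
def IDer (k A : Type*) [CommRing k] [CommRing A] [Algebra k A] (m : ℕ∞) :
    Submodule A (Derivation k A A) where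
  carrier := {δ | IsIntegrable k A m δ}
  zero_mem' := isIntegrable_zero' m
  add_mem' := fun h1 h2 => isIntegrable_add' h1 h2
  smul_mem' := fun a δ h => isIntegrable_smul' a h

set_option maxHeartbeats 2000000 in
/-- **A sufficient condition for `Leap_k(A)` to be finite.**  Let `A` be a Noetherian
`k`-algebra containing a field, and suppose there exist a maximal ideal `𝔪 ⊂ A` and
`N ≥ 1` with `𝔪^N · Der_k(A) ⊆ IDer_k(A)`.  Then, with `K = A/𝔪` (acting on the
quotient `Der_k(A)/𝔪^N Der_k(A)` compatibly with `A`), the number of leaps of `A` over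
`k` is at most `dim_K (Der_k(A)/𝔪^N Der_k(A))`; in particular if `Der_k(A)` is a
finitely generated `A`-module, then `Leap_k(A)` is finite. -/
theorem leapset_card_le_dim
    (k : Type u) (A : Type v) (F : Type w) [CommRing k] [CommRing A] [Algebra k A] [IsNoetherianRing A]
    [Field F] [Algebra F A]
    (𝔪 : Ideal A) (h𝔪 : 𝔪.IsMaximal) (N : ℕ) (hN : 1 ≤ N)
    (hint : ∀ a ∈ 𝔪 ^ N, ∀ d : Derivation k A A, IsIntegrable k A ⊤ (a • d))
    -- the `K = A/𝔪`-vector space structure on `Der_k(A)/𝔪^N·Der_k(A)`,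
    -- compatible with the `A`-module structure
    [Module (A ⧸ 𝔪)
      (Derivation k A A ⧸ ((𝔪 ^ N) • (⊤ : Submodule A (Derivation k A A))))]
    (hcompat : ∀ (a : A)
      (x : Derivation k A A ⧸ ((𝔪 ^ N) • (⊤ : Submodule A (Derivation k A A)))),
      (Ideal.Quotient.mk 𝔪 a) • x = a • x) :
    Cardinal.lift.{v} (Cardinal.mk (LeapSet k A)) ≤
      Cardinal.lift.{0} (Module.rank (A ⧸ 𝔪)
        (Derivation k A A ⧸ ((𝔪 ^ N) • (⊤ : Submodule A (Derivation k A A))))) ∧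
    (Module.Finite A (Derivation k A A) → (LeapSet k A).Finite) := by
  classical
  -- the kernel is contained in every `IDer`
  have hker : ∀ m : ℕ∞, ((𝔪 ^ N) • (⊤ : Submodule A (Derivation k A A))) ≤ IDer k A m := by
    intro m
    have h1 : ((𝔪 ^ N) • (⊤ : Submodule A (Derivation k A A))) ≤ IDer k A ⊤ :=
      Submodule.smul_le.2 fun a ha d _ => hint a ha d
    exact le_trans h1 (fun δ h => isIntegrable_mono' le_top h)
  -- the `K`-subspaces `W n`
  let W : ℕ → Submodule (A ⧸ 𝔪)
      (Derivation k A A ⧸ ((𝔪 ^ N) • (⊤ : Submodule A (Derivation k A A)))) := fun n =>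
    { carrier := ((𝔪 ^ N) • (⊤ : Submodule A (Derivation k A A))).mkQ '' (IDer k A (n : ℕ∞))
      zero_mem' := ⟨0, Submodule.zero_mem _, map_zero _⟩
      add_mem' := by
        rintro x y ⟨a, ha, rfl⟩ ⟨b, hb, rfl⟩
        exact ⟨a + b, Submodule.add_mem _ ha hb, map_add _ _ _⟩
      smul_mem' := by
        intro c x hx
        obtain ⟨a, rfl⟩ := Ideal.Quotient.mk_surjective c
        obtain ⟨d, hd, rfl⟩ := hx
        rw [hcompat]
        exact ⟨a • d, Submodule.smul_mem _ a hd, map_smul _ a d⟩ }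
  -- witnesses for each leap
  have hwit : ∀ s : LeapSet k A, ∃ δ : Derivation k A A,
      IsIntegrable k A (((s : ℕ) - 1 : ℕ) : ℕ∞) δ ∧ ¬ IsIntegrable k A ((s : ℕ) : ℕ∞) δ :=
    fun s => s.2.2
  choose δ hδ1 hδ2 using hwit
  have hs2 : ∀ s : LeapSet k A, 2 ≤ (s : ℕ) := fun s => s.2.1
  let v : LeapSet k A → (Derivation k A A ⧸ ((𝔪 ^ N) • (⊤ : Submodule A (Derivation k A A)))) :=
    fun s => ((𝔪 ^ N) • (⊤ : Submodule A (Derivation k A A))).mkQ (δ s)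
  -- `v s` lies in `W n` for all `n ≤ s - 1`
  have hvmem : ∀ (s : LeapSet k A) (n : ℕ), n ≤ (s : ℕ) - 1 → v s ∈ W n := by
    intro s n hn
    exact ⟨δ s, isIntegrable_mono' (by exact_mod_cast hn) (hδ1 s), rfl⟩
  -- `v s ∉ W s`
  have hvnot : ∀ s : LeapSet k A, v s ∉ W (s : ℕ) := by
    intro s hmem
    obtain ⟨ε, hε, heq⟩ := hmem
    apply hδ2 s
    have hker0 : δ s - ε ∈ ((𝔪 ^ N) • (⊤ : Submodule A (Derivation k A A))) := by
      rw [← Submodule.ker_mkQ ((𝔪 ^ N) • (⊤ : Submodule A (Derivation k A A)))]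
      simp only [LinearMap.mem_ker, map_sub]
      rw [heq, sub_self]
    have hrw : δ s = ε + (δ s - ε) := by abel
    rw [hrw]
    exact isIntegrable_add' hε (hker _ hker0)
  -- linear independence of the witnesses
  have hli : LinearIndependent (A ⧸ 𝔪) v := by
    rw [linearIndependent_iff']
    intro t g hsum i hi
    by_contra hgi
    set t' : Finset (LeapSet k A) := t.filter (fun j => ¬ g j = 0) with ht'
    have hit' : i ∈ t' := Finset.mem_filter.2 ⟨hi, hgi⟩
    obtain ⟨i0, hi0, hmin⟩ := t'.exists_min_image (fun j => (j : ℕ)) ⟨i, hit'⟩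
    have hgi0 : ¬ g i0 = 0 := (Finset.mem_filter.1 hi0).2
    have hsum' : ∑ j ∈ t', g j • v j = 0 := by
      rw [← hsum]
      apply Finset.sum_filter_of_ne
      intro x _ hx hgx
      exact hx (by rw [hgx, zero_smul])
    have heq0 : g i0 • v i0 = - ∑ j ∈ t'.erase i0, g j • v j := by
      have h := Finset.add_sum_erase t' (fun j => g j • v j) hi0
      rw [hsum'] at h
      exact eq_neg_of_add_eq_zero_left h
    have hW : g i0 • v i0 ∈ W (i0 : ℕ) := by
      rw [heq0]
      refine neg_mem (Submodule.sum_mem _ fun j hj => Submodule.smul_mem _ _ ?_)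
      have hj' := Finset.mem_of_mem_erase hj
      have hne : j ≠ i0 := Finset.ne_of_mem_erase hj
      have hlt : (i0 : ℕ) < (j : ℕ) :=
        lt_of_le_of_ne (hmin j hj') (fun h => hne (Subtype.ext h.symm))
      exact hvmem j (i0 : ℕ) (by have := hs2 j; omega)
    -- invert `g i0` using maximality of `𝔪`
    obtain ⟨a, ha⟩ := Ideal.Quotient.mk_surjective (g i0)
    have hanotmem : a ∉ 𝔪 := by
      intro hmem
      exact hgi0 (by rw [← ha]; exact Ideal.Quotient.eq_zero_iff_mem.2 hmem)
    obtain ⟨b, c, hc, hbc⟩ := h𝔪.exists_inv hanotmem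
    have hb1 : Ideal.Quotient.mk 𝔪 b * g i0 = 1 := by
      rw [← ha, ← map_mul, show (1 : A ⧸ 𝔪) = Ideal.Quotient.mk 𝔪 1 from rfl]
      refine Ideal.Quotient.eq.2 ?_
      have : b * a - 1 = -c := by rw [← hbc]; ring
      rw [this]
      exact 𝔪.neg_mem hc
    have hvin : v i0 ∈ W (i0 : ℕ) := by
      have h := Submodule.smul_mem (W (i0 : ℕ)) (Ideal.Quotient.mk 𝔪 b) hW
      rwa [smul_smul, hb1, one_smul] at h
    exact hvnot i0 hvin
  have hrank := hli.cardinal_lift_le_rank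
  refine ⟨hrank, ?_⟩
  intro hfin
  haveI := hfin
  haveI : Module.Finite A (Derivation k A A ⧸ ((𝔪 ^ N) • (⊤ : Submodule A (Derivation k A A)))) :=
    Module.Finite.of_surjective ((𝔪 ^ N) • (⊤ : Submodule A (Derivation k A A))).mkQ
      (Submodule.mkQ_surjective _)
  obtain ⟨S, hS⟩ := Module.Finite.fg_top (R := A)
    (M := Derivation k A A ⧸ ((𝔪 ^ N) • (⊤ : Submodule A (Derivation k A A))))
  have hspan : Submodule.span (A ⧸ 𝔪)
      (↑S : Set (Derivation k A A ⧸ ((𝔪 ^ N) • (⊤ : Submodule A (Derivation k A A))))) = ⊤ := by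
    rw [eq_top_iff]
    intro x hx'
    have hx : x ∈ Submodule.span A
        (↑S : Set (Derivation k A A ⧸ ((𝔪 ^ N) • (⊤ : Submodule A (Derivation k A A))))) := by
      rw [hS]; trivial
    clear hx'
    induction hx using Submodule.span_induction with
    | mem z hz => exact Submodule.subset_span hz
    | zero => exact Submodule.zero_mem _
    | add y z hy hz ihy ihz => exact Submodule.add_mem _ ihy ihz
    | smul a y hy ihy => rw [← hcompat]; exact Submodule.smul_mem _ _ ihy
  haveI : Module.Finite (A ⧸ 𝔪)
      (Derivation k A A ⧸ ((𝔪 ^ N) • (⊤ : Submodule A (Derivation k A A)))) := ⟨⟨S, hspan⟩⟩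
  haveI := h𝔪
  haveI : Nontrivial (A ⧸ 𝔪) := Ideal.Quotient.nontrivial_iff.mpr h𝔪.ne_top
  have hlt := Module.rank_lt_aleph0 (A ⧸ 𝔪)
    (Derivation k A A ⧸ ((𝔪 ^ N) • (⊤ : Submodule A (Derivation k A A))))
  rw [Cardinal.lift_uzero] at hrank
  have hfin' : Cardinal.lift.{v} (Cardinal.mk (LeapSet k A)) < Cardinal.aleph0 :=
    lt_of_le_of_lt hrank hlt
  rw [Cardinal.lift_lt_aleph0] at hfin'
  exact Cardinal.lt_aleph0_iff_set_finite.mp hfin'
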